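/- A connected bipartite graph with no induced 2K₂ and no (induced) C₄ is a double star, i.e., a tree obtained by joining the centers of two stars by an edge. Consequently, every {2K₂, C₄}-avoiding bipartite partition of K_n has at least ⌈n/2⌉ parts, and ⌈n/2⌉ parts suffice: χ'_{{2K₂,C₄}}(n) = ⌈n/2⌉. -/

import Mathlib

open SimpleGraph

/-- The graph `2K₂`: two disjoint edges, on vertices {0,1} and {2,3}. -/
def twoK2 : SimpleGraph (Fin 4) where
  Adj i j := i ≠ j ∧ i.val / 2 = j.val / 2
  symm := ⟨by decide⟩
  loopless := ⟨by decide⟩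

/-- The path `P₃` on 3 vertices. -/
def pathP3 : SimpleGraph (Fin 3) where
  Adj i j := i.val + 1 = j.val ∨ j.val + 1 = i.val
  symm := ⟨by decide⟩
  loopless := ⟨by decide⟩

/-- The path `P₄` on 4 vertices. -/
def pathP4 : SimpleGraph (Fin 4) where
  Adj i j := i.val + 1 = j.val ∨ j.val + 1 = i.val
  symm := ⟨by decide⟩
  loopless := ⟨by decide⟩

/-- The cycle `C₄` on 4 vertices. -/
def cycleC4 : SimpleGraph (Fin 4) where
  Adj i j := (i.val + 1) % 4 = j.val ∨ (j.val + 1) % 4 = i.val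
  symm := ⟨by decide⟩
  loopless := ⟨by decide⟩

/-- The star `S₄ = K_{1,3}` on 4 vertices, with center 0. -/
def starS4 : SimpleGraph (Fin 4) where
  Adj i j := i ≠ j ∧ (i = 0 ∨ j = 0)
  symm := ⟨by decide⟩
  loopless := ⟨by decide⟩

/-- The graph `K₂ + K₁`: an edge plus an isolated vertex. -/
def K2plusK1 : SimpleGraph (Fin 3) where
  Adj i j := (i = 0 ∧ j = 1) ∨ (i = 1 ∧ j = 0)
  symm := ⟨by decide⟩
  loopless := ⟨by decide⟩

/-- `G` avoids `H`: `H` is not an induced subgraph of `G` restricted to its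
support (the vertices incident to an edge), matching the convention that
template graphs have no isolated vertices. -/
def Avoids {α β : Type} (G : SimpleGraph α) (H : SimpleGraph β) : Prop :=
  IsEmpty (H ↪g (G.induce G.support))

/-- `P` is a partition of the edge set of the complete graph `K_n` into
bipartite graphs: every template is 2-colorable, and every edge of `K_n`
belongs to exactly one template. -/
def IsBipartitePartition (n k : ℕ) (P : Fin k → SimpleGraph (Fin n)) : Prop :=
  (∀ i, (P i).Colorable 2) ∧
    ∀ e ∈ (⊤ : SimpleGraph (Fin n)).edgeSet, ∃! i, e ∈ (P i).edgeSet

noncomputable def chiDoubleStar (n : ℕ) : ℕ :=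
  sInf {k | ∃ P : Fin k → SimpleGraph (Fin n),
    IsBipartitePartition n k P ∧ ∀ i, Avoids (P i) twoK2 ∧ Avoids (P i) cycleC4}

/-!
In a bipartite graph without induced `2K₂` and `C₄`, a path `a - b - c - d` with `a ≠ c`, `b ≠ d`
forces `bc` to meet every edge. Indeed, an edge `uv` avoiding `b` and `c` is joined to `bc`
(no `2K₂`), say `u ~ b`; then `uv` and `cd` are joined as well, and either way `u` and `c` get
two common neighbours (`b` and `d`, or `b` and `v`): a `4`-cycle, induced by bipartiteness.
An edge `ab` that is not dominating, an edge `cd` avoiding it and an edge joining the two form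
such a path, so the graph has a dominating edge `xy`: it is a double star with centres `x`, `y`.

Since `x` and `y` have no common neighbour, such a graph has at most `deg x + deg y - 1 ≤ n - 1`
edges, so `⌈n/2⌉` parts are needed to cover the `n(n-1)/2` edges of `K_n`. Conversely, having a
dominating edge passes to induced subgraphs with an edge, and neither `2K₂` nor `C₄` has one, so
any partition of `K_n` into `⌈n/2⌉` double stars is admissible.
-/

open Finset

namespace SimpleGraph

variable {V W : Type*} {G : SimpleGraph V} {H : SimpleGraph W} {a b c d u v : V}

def IsDominatingEdge (G : SimpleGraph V) (x y : V) : Prop :=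
  G.Adj x y ∧ ∀ u v, G.Adj u v → u = x ∨ u = y ∨ v = x ∨ v = y

theorem IsDominatingEdge.exists_of_embedding {x y : V} (hxy : G.IsDominatingEdge x y)
    (f : H ↪g G) {a b : W} (hab : H.Adj a b) : ∃ i j, H.IsDominatingEdge i j := by
  have cover : ∀ u v, H.Adj u v → f u = x ∨ f u = y ∨ f v = x ∨ f v = y :=
    fun u v huv => hxy.2 _ _ (f.map_adj_iff.2 huv)
  have of_star : ∀ i, (∀ u v, H.Adj u v → u = i ∨ v = i) → ∃ i j, H.IsDominatingEdge i j :=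
    fun i hi => ⟨a, b, hab, fun u v huv => by
      rcases hi a b hab with rfl | rfl <;> rcases hi u v huv with h | h <;> simp [h]⟩
  by_cases hx : ∃ i, f i = x <;> by_cases hy : ∃ j, f j = y
  · obtain ⟨i, rfl⟩ := hx
    obtain ⟨j, rfl⟩ := hy
    exact ⟨i, j, f.map_adj_iff.1 hxy.1, fun u v huv => by
      simpa only [f.injective.eq_iff] using cover u v huv⟩
  · obtain ⟨i, rfl⟩ := hx
    push Not at hy
    exact of_star i fun u v huv => by simpa [f.injective.eq_iff, hy] using cover u v huv
  · obtain ⟨j, rfl⟩ := hy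
    push Not at hx
    exact of_star j fun u v huv => by simpa [f.injective.eq_iff, hx] using cover u v huv
  · push Not at hx hy
    simpa [hx, hy] using cover a b hab

theorem IsDominatingEdge.isEmpty_embedding {x y : V} (hxy : G.IsDominatingEdge x y)
    (hH : ∀ i j, ¬ H.IsDominatingEdge i j) (hab : ∃ a b, H.Adj a b) : IsEmpty (H ↪g G) := by
  obtain ⟨a, b, hab⟩ := hab
  refine ⟨fun f => ?_⟩
  obtain ⟨i, j, hij⟩ := hxy.exists_of_embedding f hab
  exact hH i j hij

theorem IsDominatingEdge.card_edgeFinset_add_one_le [Fintype V] [DecidableEq V]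
    [DecidableRel G.Adj] {x y : V} (hxy : G.IsDominatingEdge x y) :
    #G.edgeFinset + 1 ≤ G.degree x + G.degree y := by
  have hsub : G.edgeFinset ⊆ G.incidenceFinset x ∪ G.incidenceFinset y := by
    intro e he
    induction e using Sym2.ind with
    | _ u v =>
      rw [mem_edgeFinset, mem_edgeSet] at he
      simp only [mem_union, mem_incidenceFinset, mk'_mem_incidenceSet_iff]
      rcases hxy.2 u v he with rfl | rfl | rfl | rfl <;> simp [he]
  have hinter : G.incidenceFinset x ∩ G.incidenceFinset y = {s(x, y)} := by
    rw [← coe_inj, coe_inter, coe_incidenceFinset, coe_incidenceFinset,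
      coe_singleton, incidenceSet_inter_incidenceSet_of_adj G hxy.1]
  calc #G.edgeFinset + 1
      ≤ #(G.incidenceFinset x ∪ G.incidenceFinset y) +
          #(G.incidenceFinset x ∩ G.incidenceFinset y) := by
        rw [hinter, card_singleton]
        exact Nat.add_le_add_right (card_le_card hsub) 1
    _ = G.degree x + G.degree y := by
        rw [card_union_add_card_inter, card_incidenceFinset_eq_degree,
          card_incidenceFinset_eq_degree]

section Bipartite

variable (C : G.Coloring Bool)
include C

theorem Coloring.eq_of_adj_of_adj (hab : G.Adj a b) (hbc : G.Adj b c) : C a = C c := by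
  rw [Bool.eq_not_of_ne (C.valid hab), Bool.eq_not_of_ne (C.valid hbc).symm]

theorem Coloring.degree_add_degree_le [Fintype V] [DecidableRel G.Adj] (hab : G.Adj a b) :
    G.degree a + G.degree b ≤ Fintype.card V := by
  classical
  have hdisj : Disjoint (G.neighborFinset a) (G.neighborFinset b) := by
    refine Finset.disjoint_left.2 fun w hwa hwb => C.valid hab ?_
    rw [mem_neighborFinset] at hwa hwb
    exact C.eq_of_adj_of_adj hwa hwb.symm
  rw [← card_neighborFinset_eq_degree, ← card_neighborFinset_eq_degree,
    ← card_union_of_disjoint hdisj]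
  exact card_le_univ _

end Bipartite

theorem adj_of_isEmpty_twoK2_embedding (h2 : IsEmpty (twoK2 ↪g G)) (hab : G.Adj a b)
    (hcd : G.Adj c d) (hac : a ≠ c) (had : a ≠ d) (hbc : b ≠ c) (hbd : b ≠ d) :
    G.Adj a c ∨ G.Adj a d ∨ G.Adj b c ∨ G.Adj b d := by
  by_contra! h
  obtain ⟨nac, nad, nbc, nbd⟩ := h
  refine h2.false ⟨⟨![a, b, c, d], fun i j hij => ?_⟩, fun {i j} => ?_⟩
  · fin_cases i <;> fin_cases j <;> simp_all [hab.ne, hcd.ne, hab.ne', hcd.ne']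
  · show G.Adj (![a, b, c, d] i) (![a, b, c, d] j) ↔ _
    fin_cases i <;> fin_cases j <;> simp [twoK2, hab, hcd, hab.symm, hcd.symm, nac, nad, nbc, nbd,
      G.adj_comm _ a, G.adj_comm _ b]

theorem Coloring.eq_of_isEmpty_cycleC4_embedding (C : G.Coloring Bool)
    (h4 : IsEmpty (cycleC4 ↪g G)) (hab : G.Adj a b) (hcb : G.Adj c b) (had : G.Adj a d)
    (hcd : G.Adj c d) (hac : a ≠ c) : b = d := by
  by_contra hbd
  have nac : ¬ G.Adj a c := fun h => C.valid h (C.eq_of_adj_of_adj hab hcb.symm)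
  have nbd : ¬ G.Adj b d := fun h => C.valid h (C.eq_of_adj_of_adj hab.symm had)
  refine h4.false ⟨⟨![a, b, c, d], fun i j hij => ?_⟩, fun {i j} => ?_⟩
  · fin_cases i <;> fin_cases j <;>
      simp_all [hab.ne, hcd.ne, hab.ne', hcd.ne', hcb.ne, hcb.ne', had.ne, had.ne']
  · show G.Adj (![a, b, c, d] i) (![a, b, c, d] j) ↔ _
    fin_cases i <;> fin_cases j <;> simp [cycleC4, hab, hcb, had, hcd, hab.symm, hcb.symm,
      had.symm, hcd.symm, nac, nbd, G.adj_comm _ a, G.adj_comm _ b]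

section TwoK2C4Free

variable (C : G.Coloring Bool) (h2 : IsEmpty (twoK2 ↪g G)) (h4 : IsEmpty (cycleC4 ↪g G))
include C h2 h4

theorem Coloring.eq_of_adj_of_adj_of_path (hbc : G.Adj b c) (hcd : G.Adj c d) (hbd : b ≠ d)
    (hub : G.Adj u b) (huv : G.Adj u v) (huc : u ≠ c) : v = b := by
  by_contra hvb
  have hcu : C u = C c := C.eq_of_adj_of_adj hub hbc
  have hvd : C v = C d := (C.eq_of_adj_of_adj huv.symm hub).trans (C.eq_of_adj_of_adj hbc hcd)
  have hud_or_hvc : G.Adj u d ∨ G.Adj v c := by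
    by_cases hvd' : v = d
    · exact .inl (hvd' ▸ huv)
    rcases adj_of_isEmpty_twoK2_embedding h2 huv hcd huc (fun h => C.valid hcd (h ▸ hcu).symm)
      (fun h => C.valid hcd (h ▸ hvd)) hvd' with h | h | h | h
    · exact absurd hcu (C.valid h)
    · exact .inl h
    · exact .inr h
    · exact absurd hvd (C.valid h)
  rcases hud_or_hvc with hud | hvc
  · exact hbd (C.eq_of_isEmpty_cycleC4_embedding h4 hub hbc.symm hud hcd huc)
  · exact hvb (C.eq_of_isEmpty_cycleC4_embedding h4 hub hbc.symm huv hvc.symm huc).symm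

theorem Coloring.isDominatingEdge_of_path (hab : G.Adj a b) (hbc : G.Adj b c) (hcd : G.Adj c d)
    (hac : a ≠ c) (hbd : b ≠ d) : G.IsDominatingEdge b c := by
  refine ⟨hbc, fun u v huv => ?_⟩
  by_contra! h
  obtain ⟨hub, huc, hvb, hvc⟩ := h
  rcases adj_of_isEmpty_twoK2_embedding h2 huv hbc hub huc hvb hvc with h | h | h | h
  · exact hvb (C.eq_of_adj_of_adj_of_path h2 h4 hbc hcd hbd h huv huc)
  · exact hvc (C.eq_of_adj_of_adj_of_path h2 h4 hbc.symm hab.symm hac.symm h huv hub)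
  · exact hub (C.eq_of_adj_of_adj_of_path h2 h4 hbc hcd hbd h huv.symm hvc)
  · exact huc (C.eq_of_adj_of_adj_of_path h2 h4 hbc.symm hab.symm hac.symm h huv.symm hvb)

theorem Coloring.exists_isDominatingEdge (hab : G.Adj a b) : ∃ x y, G.IsDominatingEdge x y := by
  by_cases hdom : ∀ u v, G.Adj u v → u = a ∨ u = b ∨ v = a ∨ v = b
  · exact ⟨a, b, hab, hdom⟩
  push Not at hdom
  obtain ⟨c, d, hcd, hca, hcb, hda, hdb⟩ := hdom
  rcases adj_of_isEmpty_twoK2_embedding h2 hab hcd hca.symm hda.symm hcb.symm hdb.symm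
    with h | h | h | h
  · exact ⟨a, c, C.isDominatingEdge_of_path h2 h4 hab.symm h hcd hcb.symm hda.symm⟩
  · exact ⟨a, d, C.isDominatingEdge_of_path h2 h4 hab.symm h hcd.symm hdb.symm hca.symm⟩
  · exact ⟨b, c, C.isDominatingEdge_of_path h2 h4 hab h hcd hca.symm hdb.symm⟩
  · exact ⟨b, d, C.isDominatingEdge_of_path h2 h4 hab h hcd.symm hda.symm hcb.symm⟩

theorem Coloring.card_edgeFinset_le [Fintype V] [DecidableRel G.Adj] :
    #G.edgeFinset ≤ Fintype.card V - 1 := by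
  classical
  by_cases hG : ∃ a b, G.Adj a b
  · obtain ⟨a, b, hab⟩ := hG
    obtain ⟨x, y, hxy⟩ := C.exists_isDominatingEdge h2 h4 hab
    have := hxy.card_edgeFinset_add_one_le
    have := C.degree_add_degree_le hxy.1
    omega
  · push Not at hG
    rw [edgeFinset_eq_empty.2 (eq_bot_iff_forall_not_adj.2 hG), card_empty]
    exact Nat.zero_le _

end TwoK2C4Free

end SimpleGraph

theorem isEmpty_embedding_of_avoids {α β : Type} {G : SimpleGraph α} {H : SimpleGraph β}
    (hH : ∀ v, ∃ w, H.Adj v w) (h : Avoids G H) : IsEmpty (H ↪g G) := by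
  refine ⟨fun f => h.false ((G.induceHomOfLE ?_).comp f.isoInduceRange.toEmbedding)⟩
  rintro _ ⟨v, rfl⟩
  obtain ⟨w, hw⟩ := hH v
  exact ⟨f w, f.map_adj_iff.2 hw⟩

theorem avoids_of_isEmpty_embedding {α β : Type} {G : SimpleGraph α} {H : SimpleGraph β}
    (h : IsEmpty (H ↪g G)) : Avoids G H :=
  ⟨fun f => h.false ((Embedding.induce _).comp f)⟩

theorem SimpleGraph.IsDominatingEdge.avoids_comap {α β γ : Type} {G : SimpleGraph α}
    {H : SimpleGraph β} {x y : α} (hxy : G.IsDominatingEdge x y) (f : γ ↪ α)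
    (hH : ∀ i j, ¬ H.IsDominatingEdge i j) (hab : ∃ a b, H.Adj a b) : Avoids (G.comap f) H :=
  avoids_of_isEmpty_embedding
    ⟨fun e => (hxy.isEmpty_embedding hH hab).false ((Embedding.comap f G).comp e)⟩

instance : DecidableRel twoK2.Adj := fun _ _ => inferInstanceAs (Decidable (_ ∧ _))

instance : DecidableRel cycleC4.Adj := fun _ _ => inferInstanceAs (Decidable (_ ∨ _))

theorem twoK2_not_isDominatingEdge : ∀ i j, ¬ twoK2.IsDominatingEdge i j := by
  unfold IsDominatingEdge; decide

theorem cycleC4_not_isDominatingEdge : ∀ i j, ¬ cycleC4.IsDominatingEdge i j := by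
  unfold IsDominatingEdge; decide

theorem IsBipartitePartition.le_two_mul {n m : ℕ} {P : Fin m → SimpleGraph (Fin n)}
    (hP : IsBipartitePartition n m P) (hav : ∀ i, Avoids (P i) twoK2 ∧ Avoids (P i) cycleC4)
    (hn : 2 ≤ n) : n ≤ 2 * m := by
  classical
  have hpart : ∀ i, #(P i).edgeFinset ≤ n - 1 := fun i => by
    simpa using (recolorOfEquiv _ finTwoEquiv (hP.1 i).some).card_edgeFinset_le
      (isEmpty_embedding_of_avoids (by decide) (hav i).1)
      (isEmpty_embedding_of_avoids (by decide) (hav i).2)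
  have hcover :
      (⊤ : SimpleGraph (Fin n)).edgeFinset ⊆ univ.biUnion fun i => (P i).edgeFinset := by
    intro e he
    obtain ⟨i, hi, -⟩ := hP.2 e (mem_edgeFinset.1 he)
    exact mem_biUnion.2 ⟨i, mem_univ _, mem_edgeFinset.2 hi⟩
  have hcount : n.choose 2 ≤ m * (n - 1) := calc
    n.choose 2 = #(⊤ : SimpleGraph (Fin n)).edgeFinset := by
      rw [card_edgeFinset_top_eq_card_choose_two, Fintype.card_fin]
    _ ≤ ∑ i, #(P i).edgeFinset := (card_le_card hcover).trans card_biUnion_le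
    _ ≤ m * (n - 1) := by simpa using sum_le_sum fun i (_ : i ∈ univ) => hpart i
  have hsq : n * (n - 1) ≤ 2 * m * (n - 1) := by
    rw [← Nat.div_two_mul_two_of_even n.even_mul_pred_self, ← Nat.choose_two_right]
    linarith
  exact Nat.le_of_mul_le_mul_right hsq (by omega)

/-- Part `i` is the double star with centres `i` and `k + i`: the centre `i` is joined to the
vertices outside the interval `(i, k + i)`, the centre `k + i` to those inside it. -/
def doubleStarIndex (k x y : ℕ) : ℕ :=
  if max x y < k then max x y
  else if min x y + k ≤ max x y then min x y
  else max x y - k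

def doubleStarPart (k i : ℕ) : SimpleGraph ℕ :=
  SimpleGraph.fromRel fun x y => doubleStarIndex k x y = i

section DoubleStarPart

variable {k i x y : ℕ}

theorem doubleStarIndex_comm (k x y : ℕ) : doubleStarIndex k x y = doubleStarIndex k y x := by
  simp only [doubleStarIndex, max_comm, min_comm]

theorem doubleStarPart_adj :
    (doubleStarPart k i).Adj x y ↔ x ≠ y ∧ doubleStarIndex k x y = i := by
  simp [doubleStarPart, doubleStarIndex_comm k y x]

theorem doubleStarIndex_lt (hx : x < 2 * k) (hy : y < 2 * k) : doubleStarIndex k x y < k := by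
  unfold doubleStarIndex
  split_ifs <;> omega

theorem isDominatingEdge_doubleStarPart (hk : 0 < k) :
    (doubleStarPart k i).IsDominatingEdge i (k + i) := by
  refine ⟨doubleStarPart_adj.2 ⟨by omega, by unfold doubleStarIndex; split_ifs <;> omega⟩,
    fun u v huv => ?_⟩
  obtain ⟨-, rfl⟩ := doubleStarPart_adj.1 huv
  unfold doubleStarIndex
  split_ifs <;> omega

theorem colorable_doubleStarPart (hk : 0 < k) : (doubleStarPart k i).Colorable 2 := by
  refine ⟨Coloring.mk (fun v => if i ≤ v ∧ v < k + i then 0 else 1) fun {u v} huv => ?_⟩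
  obtain ⟨huv, rfl⟩ := doubleStarPart_adj.1 huv
  unfold doubleStarIndex
  split_ifs <;> omega

end DoubleStarPart

theorem isBipartitePartition_doubleStarPart {n k : ℕ} (hk : 0 < k) (hn : n ≤ 2 * k) :
    IsBipartitePartition n k fun i => (doubleStarPart k i).comap Fin.valEmbedding := by
  refine ⟨fun i => (colorable_doubleStarPart hk).of_hom (Embedding.comap _ _).toHom,
    fun e he => ?_⟩
  induction e using Sym2.ind with
  | _ u v =>
    rw [mem_edgeSet, top_adj] at he
    refine ⟨⟨doubleStarIndex k u v, doubleStarIndex_lt (by omega) (by omega)⟩, ?_, fun j hj => ?_⟩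
    · simp [doubleStarPart_adj, Fin.val_ne_of_ne he]
    · simp only [mem_edgeSet, comap_adj, Fin.valEmbedding_apply, doubleStarPart_adj] at hj
      exact Fin.ext hj.2.symm

/-- A connected bipartite graph (with an edge) avoiding induced `2K₂` and `C₄`
is a double star; consequently `χ'_{2K₂,C₄}(n) = ⌈n/2⌉`. -/
theorem doubleStar_and_chi :
    (∀ (V : Type) (G : SimpleGraph V) (c : V → Bool),
      (∀ {u v : V}, G.Adj u v → c u ≠ c v) → G.Connected →
      IsEmpty (twoK2 ↪g G) → IsEmpty (cycleC4 ↪g G) →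
      (∃ u v, G.Adj u v) →
      ∃ x y : V, G.Adj x y ∧
        ∀ u v : V, G.Adj u v → u = x ∨ u = y ∨ v = x ∨ v = y) ∧
    (∀ n : ℕ, 2 ≤ n → chiDoubleStar n = (n + 1) / 2) := by
  refine ⟨fun V G c hc _ h2 h4 ⟨u, v, huv⟩ =>
    (Coloring.mk c hc).exists_isDominatingEdge h2 h4 huv, fun n hn => ?_⟩
  have hk : 0 < (n + 1) / 2 := by omega
  refine IsLeast.csInf_eq ⟨⟨_, isBipartitePartition_doubleStarPart hk (by omega), fun i => ?_⟩, ?_⟩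
  · have hdom := isDominatingEdge_doubleStarPart (i := i) hk
    exact ⟨hdom.avoids_comap _ twoK2_not_isDominatingEdge ⟨0, 1, by decide⟩,
      hdom.avoids_comap _ cycleC4_not_isDominatingEdge ⟨0, 1, by decide⟩⟩
  · rintro m ⟨P, hP, hav⟩
    have := hP.le_two_mul hav hn
    omega
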